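/- arXiv:2508.01348 — 3 statements merged into one kernel-verified Lean document; each statement's English description precedes it below -/
import Mathlib

section
/- If (1/m)Σ_i ‖P − B_i‖_F² ≤ P_c²η², (1/m)Σ_i ‖Q − A_i‖_F² ≤ Q_c²η², ‖B_i‖_F ≤ C_B and ‖A_i‖_F ≤ C_A for all i, then (1/m) Σ_{i=1}^m ‖P Q − B_i A_i‖_F² ≤ 4 P_c² Q_c² η⁴ + 3 C_B² Q_c² η² + 3 C_A² P_c² η². In particular, the strong convergence condition implies the weak convergence condition with R² = 4P_c²Q_c²η² + 3C_B²Q_c² + 3C_A²P_c². -/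
open Matrix Finset

attribute [local instance] Matrix.frobeniusSeminormedAddCommGroup
  Matrix.frobeniusNormedAddCommGroup Matrix.frobeniusNormedSpace

lemma sq_bound_aux (x p q ca cb dp dq : ℝ)
    (h1 : x ^ 2 ≤ (p * dq + dp * ca) ^ 2) (h2 : x ^ 2 ≤ (cb * dq + dp * q) ^ 2) :
    x ^ 2 ≤ (p ^ 2 + cb ^ 2) * dq ^ 2 + (ca ^ 2 + q ^ 2) * dp ^ 2 := by
  nlinarith [sq_nonneg (p * dq - ca * dp), sq_nonneg (cb * dq - q * dp)]

set_option maxHeartbeats 1000000 in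
theorem strong_implies_weak_bound
    (d r n m : ℕ) (hm : 0 < m)
    (P : Matrix (Fin d) (Fin r) ℝ) (Q : Matrix (Fin r) (Fin n) ℝ)
    (B : Fin m → Matrix (Fin d) (Fin r) ℝ) (A : Fin m → Matrix (Fin r) (Fin n) ℝ)
    (Pc Qc CB CA η : ℝ) (hPc : 0 < Pc) (hQc : 0 < Qc) (hη : 0 < η)
    (hP : (1 / (m : ℝ)) * ∑ i, ‖P - B i‖ ^ 2 ≤ Pc ^ 2 * η ^ 2)
    (hQ : (1 / (m : ℝ)) * ∑ i, ‖Q - A i‖ ^ 2 ≤ Qc ^ 2 * η ^ 2)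
    (hB : ∀ i, ‖B i‖ ≤ CB) (hA : ∀ i, ‖A i‖ ≤ CA) :
    (1 / (m : ℝ)) * ∑ i, ‖P * Q - B i * A i‖ ^ 2
      ≤ 4 * Pc ^ 2 * Qc ^ 2 * η ^ 4 + 3 * CB ^ 2 * Qc ^ 2 * η ^ 2
        + 3 * CA ^ 2 * Pc ^ 2 * η ^ 2 := by
  have hm' : (0 : ℝ) < m := by exact_mod_cast hm
  have i0 : Fin m := ⟨0, hm⟩
  have hCB : 0 ≤ CB := le_trans (norm_nonneg _) (hB i0)
  have hCA : 0 ≤ CA := le_trans (norm_nonneg _) (hA i0)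
  -- bound ‖P‖
  have hsumP : ∑ i, ‖P - B i‖ ^ 2 ≤ ∑ _i : Fin m, Pc ^ 2 * η ^ 2 := by
    rw [Finset.sum_const, card_univ, Fintype.card_fin, nsmul_eq_mul]
    rw [div_mul_eq_mul_div, one_mul, div_le_iff₀ hm'] at hP
    linarith [hP]
  obtain ⟨iP, _, hiP⟩ := Finset.exists_le_of_sum_le ⟨i0, Finset.mem_univ i0⟩ hsumP
  have hPB : ‖P - B iP‖ ≤ Pc * η := by
    have h0 : (0:ℝ) ≤ Pc * η := by positivity
    nlinarith [norm_nonneg (P - B iP)]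
  have hPle : ‖P‖ ≤ CB + Pc * η := by
    calc ‖P‖ = ‖(P - B iP) + B iP‖ := by rw [sub_add_cancel]
    _ ≤ ‖P - B iP‖ + ‖B iP‖ := norm_add_le _ _
    _ ≤ CB + Pc * η := by linarith [hB iP]
  -- bound ‖Q‖
  have hsumQ : ∑ i, ‖Q - A i‖ ^ 2 ≤ ∑ _i : Fin m, Qc ^ 2 * η ^ 2 := by
    rw [Finset.sum_const, card_univ, Fintype.card_fin, nsmul_eq_mul]
    rw [div_mul_eq_mul_div, one_mul, div_le_iff₀ hm'] at hQ
    linarith [hQ]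
  obtain ⟨iQ, _, hiQ⟩ := Finset.exists_le_of_sum_le ⟨i0, Finset.mem_univ i0⟩ hsumQ
  have hQA : ‖Q - A iQ‖ ≤ Qc * η := by
    have h0 : (0:ℝ) ≤ Qc * η := by positivity
    nlinarith [norm_nonneg (Q - A iQ)]
  have hQle : ‖Q‖ ≤ CA + Qc * η := by
    calc ‖Q‖ = ‖(Q - A iQ) + A iQ‖ := by rw [sub_add_cancel]
    _ ≤ ‖Q - A iQ‖ + ‖A iQ‖ := norm_add_le _ _
    _ ≤ CA + Qc * η := by linarith [hA iQ]
  -- pointwise key bound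
  have key : ∀ i, ‖P * Q - B i * A i‖ ^ 2 ≤
      (‖P‖ ^ 2 + CB ^ 2) * ‖Q - A i‖ ^ 2 + (CA ^ 2 + ‖Q‖ ^ 2) * ‖P - B i‖ ^ 2 := by
    intro i
    have e1 : P * Q - B i * A i = P * (Q - A i) + (P - B i) * A i := by
      simp [Matrix.mul_sub, Matrix.sub_mul]
    have e2 : P * Q - B i * A i = B i * (Q - A i) + (P - B i) * Q := by
      simp [Matrix.mul_sub, Matrix.sub_mul]
    have h1 : ‖P * Q - B i * A i‖ ≤ ‖P‖ * ‖Q - A i‖ + ‖P - B i‖ * CA := by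
      rw [e1]
      refine le_trans (norm_add_le _ _) (add_le_add ?_ ?_)
      · exact Matrix.frobenius_norm_mul _ _
      · exact le_trans (Matrix.frobenius_norm_mul _ _)
          (mul_le_mul_of_nonneg_left (hA i) (norm_nonneg _))
    have h2 : ‖P * Q - B i * A i‖ ≤ CB * ‖Q - A i‖ + ‖P - B i‖ * ‖Q‖ := by
      rw [e2]
      refine le_trans (norm_add_le _ _) (add_le_add ?_ ?_)
      · exact le_trans (Matrix.frobenius_norm_mul _ _)
          (mul_le_mul_of_nonneg_right (hB i) (norm_nonneg _))
      · exact Matrix.frobenius_norm_mul _ _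
    have hx : (0:ℝ) ≤ ‖P * Q - B i * A i‖ := norm_nonneg _
    have h1s : ‖P * Q - B i * A i‖ ^ 2 ≤ (‖P‖ * ‖Q - A i‖ + ‖P - B i‖ * CA) ^ 2 :=
      pow_le_pow_left₀ hx h1 2
    have h2s : ‖P * Q - B i * A i‖ ^ 2 ≤ (CB * ‖Q - A i‖ + ‖P - B i‖ * ‖Q‖) ^ 2 :=
      pow_le_pow_left₀ hx h2 2
    exact sq_bound_aux _ _ _ _ _ _ _ h1s h2s
  have hsum : ∑ i, ‖P * Q - B i * A i‖ ^ 2 ≤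
      (‖P‖ ^ 2 + CB ^ 2) * ∑ i, ‖Q - A i‖ ^ 2
        + (CA ^ 2 + ‖Q‖ ^ 2) * ∑ i, ‖P - B i‖ ^ 2 := by
    rw [Finset.mul_sum, Finset.mul_sum, ← Finset.sum_add_distrib]
    exact Finset.sum_le_sum fun i _ => key i
  have havg : (1 / (m : ℝ)) * ∑ i, ‖P * Q - B i * A i‖ ^ 2 ≤
      (‖P‖ ^ 2 + CB ^ 2) * ((1 / (m : ℝ)) * ∑ i, ‖Q - A i‖ ^ 2)
        + (CA ^ 2 + ‖Q‖ ^ 2) * ((1 / (m : ℝ)) * ∑ i, ‖P - B i‖ ^ 2) := by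
    have h0 : (0:ℝ) ≤ 1 / (m : ℝ) := by positivity
    calc (1 / (m : ℝ)) * ∑ i, ‖P * Q - B i * A i‖ ^ 2
        ≤ (1 / (m : ℝ)) * ((‖P‖ ^ 2 + CB ^ 2) * ∑ i, ‖Q - A i‖ ^ 2
            + (CA ^ 2 + ‖Q‖ ^ 2) * ∑ i, ‖P - B i‖ ^ 2) :=
          mul_le_mul_of_nonneg_left hsum h0
      _ = (‖P‖ ^ 2 + CB ^ 2) * ((1 / (m : ℝ)) * ∑ i, ‖Q - A i‖ ^ 2)
            + (CA ^ 2 + ‖Q‖ ^ 2) * ((1 / (m : ℝ)) * ∑ i, ‖P - B i‖ ^ 2) := by ring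
  have hPn : 0 ≤ ‖P‖ := norm_nonneg _
  have hQn : 0 ≤ ‖Q‖ := norm_nonneg _
  have hSq : 0 ≤ (1 / (m : ℝ)) * ∑ i, ‖Q - A i‖ ^ 2 :=
    mul_nonneg (by positivity) (Finset.sum_nonneg fun i _ => sq_nonneg _)
  have hSp : 0 ≤ (1 / (m : ℝ)) * ∑ i, ‖P - B i‖ ^ 2 :=
    mul_nonneg (by positivity) (Finset.sum_nonneg fun i _ => sq_nonneg _)
  have hPsq : ‖P‖ ^ 2 ≤ 2 * CB ^ 2 + 2 * Pc ^ 2 * η ^ 2 := by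
    nlinarith [mul_le_mul hPle hPle hPn (by positivity : (0:ℝ) ≤ CB + Pc * η),
      sq_nonneg (CB - Pc * η)]
  have hQsq : ‖Q‖ ^ 2 ≤ 2 * CA ^ 2 + 2 * Qc ^ 2 * η ^ 2 := by
    nlinarith [mul_le_mul hQle hQle hQn (by positivity : (0:ℝ) ≤ CA + Qc * η),
      sq_nonneg (CA - Qc * η)]
  have t1 : (‖P‖ ^ 2 + CB ^ 2) * ((1 / (m : ℝ)) * ∑ i, ‖Q - A i‖ ^ 2)
      ≤ (3 * CB ^ 2 + 2 * Pc ^ 2 * η ^ 2) * (Qc ^ 2 * η ^ 2) :=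
    mul_le_mul (by linarith) hQ hSq (by positivity)
  have t2 : (CA ^ 2 + ‖Q‖ ^ 2) * ((1 / (m : ℝ)) * ∑ i, ‖P - B i‖ ^ 2)
      ≤ (3 * CA ^ 2 + 2 * Qc ^ 2 * η ^ 2) * (Pc ^ 2 * η ^ 2) :=
    mul_le_mul (by linarith) hP hSp (by positivity)
  have hfin : (3 * CB ^ 2 + 2 * Pc ^ 2 * η ^ 2) * (Qc ^ 2 * η ^ 2)
        + (3 * CA ^ 2 + 2 * Qc ^ 2 * η ^ 2) * (Pc ^ 2 * η ^ 2)
      = 4 * Pc ^ 2 * Qc ^ 2 * η ^ 4 + 3 * CB ^ 2 * Qc ^ 2 * η ^ 2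
        + 3 * CA ^ 2 * Pc ^ 2 * η ^ 2 := by ring
  linarith [havg, t1, t2]
end

section
/- With B' = B − η G Aᵀ, A' = A − η Bᵀ G and G = ∇_W L(W₀+BA), the Frobenius inner product ⟨B'A' − BA, G⟩_F equals η² ⟨G Aᵀ Bᵀ G, G⟩_F − η ‖G Aᵀ‖_F² − η ‖Bᵀ G‖_F², and hence under the bounds ‖A‖_F ≤ C_A, ‖B‖_F ≤ C_B, ‖G‖_F ≤ G₀ it satisfies ⟨B'A' − BA, G⟩_F ≤ η² C_A C_B G₀³ − η(‖G Aᵀ‖_F² + ‖Bᵀ G‖_F²). -/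
open Matrix Finset

attribute [local instance] Matrix.frobeniusSeminormedAddCommGroup
  Matrix.frobeniusNormedAddCommGroup Matrix.frobeniusNormedSpace

private lemma frob_norm_sq {d n : ℕ} (X : Matrix (Fin d) (Fin n) ℝ) :
    ‖X‖ ^ 2 = ∑ i, ∑ j, X i j ^ 2 := by
  have hs : (0 : ℝ) ≤ ∑ i, ∑ j, ‖X i j‖ ^ (2 : ℝ) := by
    positivity
  rw [Matrix.frobenius_norm_def, ← Real.rpow_natCast _ 2, ← Real.rpow_mul hs]
  norm_num

private lemma trace_transpose_mul {d n : ℕ} (X Y : Matrix (Fin d) (Fin n) ℝ) :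
    (Xᵀ * Y).trace = ∑ j, ∑ i, X i j * Y i j := by
  simp [Matrix.trace, Matrix.mul_apply, Matrix.diag, Matrix.transpose_apply]

private lemma frob_norm_sq_eq_trace {d n : ℕ} (X : Matrix (Fin d) (Fin n) ℝ) :
    (Xᵀ * X).trace = ‖X‖ ^ 2 := by
  rw [trace_transpose_mul, frob_norm_sq, Finset.sum_comm]
  simp [sq]

private lemma trace_le_norm_mul_norm {d n : ℕ} (X Y : Matrix (Fin d) (Fin n) ℝ) :
    (Xᵀ * Y).trace ≤ ‖X‖ * ‖Y‖ := by
  have h := sum_mul_sq_le_sq_mul_sq (Finset.univ (α := Fin d × Fin n))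
    (fun p => X p.1 p.2) (fun p => Y p.1 p.2)
  have hx : ∑ p : Fin d × Fin n, X p.1 p.2 ^ 2 = ‖X‖ ^ 2 := by
    rw [frob_norm_sq, ← Finset.sum_product']
    rfl
  have hy : ∑ p : Fin d × Fin n, Y p.1 p.2 ^ 2 = ‖Y‖ ^ 2 := by
    rw [frob_norm_sq, ← Finset.sum_product']
    rfl
  have ht : (Xᵀ * Y).trace = ∑ p : Fin d × Fin n, X p.1 p.2 * Y p.1 p.2 := by
    rw [trace_transpose_mul, Finset.sum_comm, ← Finset.sum_product']
    rfl
  rw [hx, hy] at h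
  have h1 : (0:ℝ) ≤ ‖X‖ * ‖Y‖ := mul_nonneg (norm_nonneg _) (norm_nonneg _)
  nlinarith [ht ▸ h]

theorem lora_one_step_inner_product
    (d r n : ℕ)
    (B : Matrix (Fin d) (Fin r) ℝ) (A : Matrix (Fin r) (Fin n) ℝ)
    (G : Matrix (Fin d) (Fin n) ℝ) (η CA CB G₀ : ℝ) (hη : 0 < η)
    (hA : ‖A‖ ≤ CA) (hB : ‖B‖ ≤ CB) (hG : ‖G‖ ≤ G₀) :
    (((B - η • (G * Aᵀ)) * (A - η • (Bᵀ * G)) - B * A)ᵀ * G).trace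
        = η ^ 2 * ((G * Aᵀ * Bᵀ * G)ᵀ * G).trace
          - η * ‖G * Aᵀ‖ ^ 2 - η * ‖Bᵀ * G‖ ^ 2 ∧
    (((B - η • (G * Aᵀ)) * (A - η • (Bᵀ * G)) - B * A)ᵀ * G).trace
        ≤ η ^ 2 * CA * CB * G₀ ^ 3 - η * (‖G * Aᵀ‖ ^ 2 + ‖Bᵀ * G‖ ^ 2) := by
  have key : (((B - η • (G * Aᵀ)) * (A - η • (Bᵀ * G)) - B * A)ᵀ * G).trace
      = η ^ 2 * ((G * Aᵀ * Bᵀ * G)ᵀ * G).trace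
        - η * ‖G * Aᵀ‖ ^ 2 - η * ‖Bᵀ * G‖ ^ 2 := by
    have expand : ((B - η • (G * Aᵀ)) * (A - η • (Bᵀ * G)) - B * A)
        = (η ^ 2) • (G * Aᵀ * Bᵀ * G) - η • (G * Aᵀ * A) - η • (B * (Bᵀ * G)) := by
      rw [show G * Aᵀ * Bᵀ * G = G * Aᵀ * (Bᵀ * G) from Matrix.mul_assoc _ _ _]
      simp only [Matrix.sub_mul, Matrix.mul_sub, Matrix.smul_mul, Matrix.mul_smul, smul_smul, sq]
      module
    have h1 : ((G * Aᵀ * A)ᵀ * G).trace = ‖G * Aᵀ‖ ^ 2 := by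
      rw [← frob_norm_sq_eq_trace, Matrix.transpose_mul, Matrix.mul_assoc,
        Matrix.trace_mul_comm, Matrix.mul_assoc]
    have h2 : ((B * (Bᵀ * G))ᵀ * G).trace = ‖Bᵀ * G‖ ^ 2 := by
      rw [← frob_norm_sq_eq_trace]
      simp only [Matrix.transpose_mul, Matrix.mul_assoc]
    rw [expand]
    simp only [Matrix.transpose_sub, Matrix.transpose_smul, Matrix.sub_mul, Matrix.smul_mul,
      Matrix.trace_sub, Matrix.trace_smul, smul_eq_mul]
    rw [h1, h2]
  refine ⟨key, ?_⟩
  rw [key]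
  have hG0 : (0:ℝ) ≤ G₀ := le_trans (norm_nonneg _) hG
  have hCA : (0:ℝ) ≤ CA := le_trans (norm_nonneg _) hA
  have hCB : (0:ℝ) ≤ CB := le_trans (norm_nonneg _) hB
  have hcs : ((G * Aᵀ * Bᵀ * G)ᵀ * G).trace ≤ ‖G * Aᵀ * Bᵀ * G‖ * ‖G‖ :=
    trace_le_norm_mul_norm _ _
  have hb1 : ‖G * Aᵀ * Bᵀ * G‖ ≤ ‖G‖ * ‖Aᵀ‖ * ‖Bᵀ‖ * ‖G‖ := by
    calc ‖G * Aᵀ * Bᵀ * G‖ ≤ ‖G * Aᵀ * Bᵀ‖ * ‖G‖ := Matrix.frobenius_norm_mul _ _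
    _ ≤ (‖G * Aᵀ‖ * ‖Bᵀ‖) * ‖G‖ := by
        gcongr; exact Matrix.frobenius_norm_mul _ _
    _ ≤ (‖G‖ * ‖Aᵀ‖ * ‖Bᵀ‖) * ‖G‖ := by
        gcongr; exact Matrix.frobenius_norm_mul _ _
  rw [Matrix.frobenius_norm_transpose, Matrix.frobenius_norm_transpose] at hb1
  have hfin : ((G * Aᵀ * Bᵀ * G)ᵀ * G).trace ≤ CA * CB * G₀ ^ 3 := by
    have hb2 : ‖G * Aᵀ * Bᵀ * G‖ ≤ G₀ * CA * CB * G₀ := by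
      calc ‖G * Aᵀ * Bᵀ * G‖ ≤ ‖G‖ * ‖A‖ * ‖B‖ * ‖G‖ := hb1
        _ ≤ G₀ * CA * CB * G₀ := by gcongr <;> positivity
    have h2 : ‖G * Aᵀ * Bᵀ * G‖ * ‖G‖ ≤ (G₀ * CA * CB * G₀) * G₀ :=
      mul_le_mul hb2 hG (norm_nonneg _)
        (mul_nonneg (mul_nonneg (mul_nonneg hG0 hCA) hCB) hG0)
    nlinarith
  nlinarith [sq_nonneg η]
end

section
/- Under the drift bounds ‖A_j^{(t+1)} − A_i^{(t+1)}‖_F² ≤ 4E²C_B²G₀²η² and ‖B_j^{(t+1)} − B_i^{(t+1)}‖_F² ≤ 4E²C_A²G₀²η² for all i, j, together with ‖A_i^{(t+1)}‖_F ≤ C_A and ‖B_j^{(t+1)}‖_F ≤ C_B, the Sum-Product aggregate W̄ = (1/m)Σ_j B_j^{(t+1)} A_j^{(t+1)} satisfies (1/m) Σ_{i=1}^m ‖W̄ − B_i^{(t+1)} A_i^{(t+1)}‖_F² ≤ 8 E² G₀² (C_A⁴ + C_B⁴) η². -/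
open Matrix Finset

attribute [local instance] Matrix.frobeniusSeminormedAddCommGroup
  Matrix.frobeniusNormedAddCommGroup Matrix.frobeniusNormedSpace

theorem sp_aggregation_weak_condition
    (d r n m : ℕ) (hm : 0 < m)
    (B : Fin m → Matrix (Fin d) (Fin r) ℝ) (A : Fin m → Matrix (Fin r) (Fin n) ℝ)
    (CA CB G₀ η : ℝ) (E : ℕ) (hE : 0 < E)
    (hCA : 0 < CA) (hCB : 0 < CB) (hG : 0 < G₀) (hη : 0 < η)
    (hdriftA : ∀ i j, ‖A j - A i‖ ^ 2 ≤ 4 * (E : ℝ) ^ 2 * CB ^ 2 * G₀ ^ 2 * η ^ 2)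
    (hdriftB : ∀ i j, ‖B j - B i‖ ^ 2 ≤ 4 * (E : ℝ) ^ 2 * CA ^ 2 * G₀ ^ 2 * η ^ 2)
    (hA : ∀ i, ‖A i‖ ≤ CA) (hB : ∀ j, ‖B j‖ ≤ CB) :
    (1 / (m : ℝ)) * ∑ i, ‖((1 / (m : ℝ)) • ∑ j, B j * A j) - B i * A i‖ ^ 2
      ≤ 8 * (E : ℝ) ^ 2 * G₀ ^ 2 * (CA ^ 4 + CB ^ 4) * η ^ 2 := by
  have hmR : (0:ℝ) < m := by exact_mod_cast hm
  have hEpos : (0:ℝ) < E := by exact_mod_cast hE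
  set K : ℝ := 2 * E * G₀ * η * (CA^2 + CB^2) with hKdef
  have hKpos : 0 ≤ K := by positivity
  have key : ∀ i : Fin m, ‖((1 / (m : ℝ)) • ∑ j, B j * A j) - B i * A i‖ ≤ K := by
    intro i
    have hsplit : ((1 / (m : ℝ)) • ∑ j, B j * A j) - B i * A i
        = (1 / (m:ℝ)) • ∑ j : Fin m, (B j * A j - B i * A i) := by
      rw [Finset.sum_sub_distrib, smul_sub, Finset.sum_const, Finset.card_univ,
        Fintype.card_fin]
      congr 1
      rw [Nat.cast_smul_eq_nsmul ℝ m (B i * A i) |>.symm, smul_smul, one_div,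
        inv_mul_cancel₀ (ne_of_gt hmR), one_smul]
    have hterm : ∀ j : Fin m, ‖B j * A j - B i * A i‖ ≤ K := by
      intro j
      have hdiff : B j * A j - B i * A i = B j * (A j - A i) + (B j - B i) * A i := by
        rw [Matrix.mul_sub, Matrix.sub_mul]
        abel
      have hb1 : (0:ℝ) < 2 * E * CB * G₀ * η := by positivity
      have hb2 : (0:ℝ) < 2 * E * CA * G₀ * η := by positivity
      have hAd : ‖A j - A i‖ ≤ 2 * E * CB * G₀ * η := by
        nlinarith [hdriftA i j, norm_nonneg (A j - A i)]
      have hBd : ‖B j - B i‖ ≤ 2 * E * CA * G₀ * η := by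
        nlinarith [hdriftB i j, norm_nonneg (B j - B i)]
      have e1 : ‖B j‖ * ‖A j - A i‖ ≤ CB * (2 * E * CB * G₀ * η) :=
        mul_le_mul (hB j) hAd (norm_nonneg _) hCB.le
      have e2 : ‖B j - B i‖ * ‖A i‖ ≤ (2 * E * CA * G₀ * η) * CA :=
        mul_le_mul hBd (hA i) (norm_nonneg _) hb2.le
      calc ‖B j * A j - B i * A i‖
          ≤ ‖B j * (A j - A i)‖ + ‖(B j - B i) * A i‖ := by
            rw [hdiff]; exact norm_add_le _ _
        _ ≤ ‖B j‖ * ‖A j - A i‖ + ‖B j - B i‖ * ‖A i‖ :=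
            add_le_add (Matrix.frobenius_norm_mul _ _) (Matrix.frobenius_norm_mul _ _)
        _ ≤ CB * (2 * E * CB * G₀ * η) + (2 * E * CA * G₀ * η) * CA := add_le_add e1 e2
        _ = K := by rw [hKdef]; ring
    have hsb : ∑ j : Fin m, ‖B j * A j - B i * A i‖ ≤ (m:ℝ) * K := by
      calc ∑ j : Fin m, ‖B j * A j - B i * A i‖
          ≤ ∑ _j : Fin m, K := Finset.sum_le_sum (fun j _ => hterm j)
        _ = (m:ℝ) * K := by
            rw [Finset.sum_const, Finset.card_univ, Fintype.card_fin, nsmul_eq_mul]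
    calc ‖((1 / (m : ℝ)) • ∑ j, B j * A j) - B i * A i‖
        = ‖(1 / (m:ℝ)) • ∑ j : Fin m, (B j * A j - B i * A i)‖ := by rw [hsplit]
      _ = (1 / (m:ℝ)) * ‖∑ j : Fin m, (B j * A j - B i * A i)‖ := by
          rw [norm_smul, Real.norm_eq_abs, abs_of_pos (by positivity)]
      _ ≤ (1 / (m:ℝ)) * ((m:ℝ) * K) := by
          have := (norm_sum_le Finset.univ (fun j => B j * A j - B i * A i)).trans hsb
          exact mul_le_mul_of_nonneg_left this (by positivity)
      _ = K := by field_simp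
  have hsum : ∑ i, ‖((1 / (m : ℝ)) • ∑ j, B j * A j) - B i * A i‖ ^ 2
      ≤ (m:ℝ) * K^2 := by
    calc ∑ i, ‖((1 / (m : ℝ)) • ∑ j, B j * A j) - B i * A i‖ ^ 2
        ≤ ∑ _i : Fin m, K^2 := by
          refine Finset.sum_le_sum (fun i _ => ?_)
          have := key i
          nlinarith [norm_nonneg (((1 / (m : ℝ)) • ∑ j, B j * A j) - B i * A i)]
      _ = (m:ℝ) * K^2 := by
          rw [Finset.sum_const, Finset.card_univ, Fintype.card_fin, nsmul_eq_mul]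
  have h1 : (1 / (m : ℝ)) * ∑ i, ‖((1 / (m : ℝ)) • ∑ j, B j * A j) - B i * A i‖ ^ 2
      ≤ K ^ 2 := by
    calc (1 / (m : ℝ)) * ∑ i, ‖((1 / (m : ℝ)) • ∑ j, B j * A j) - B i * A i‖ ^ 2
        ≤ (1 / (m:ℝ)) * ((m:ℝ) * K^2) :=
          mul_le_mul_of_nonneg_left hsum (by positivity)
      _ = K ^ 2 := by field_simp
  refine h1.trans ?_
  rw [hKdef]
  nlinarith [sq_nonneg (CA^2 - CB^2), sq_nonneg ((E:ℝ)*G₀*η), mul_pos (mul_pos hEpos hG) hη]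
end
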